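/- arXiv:2410.13682 — 2 statements merged into one kernel-verified Lean document; each statement's English description precedes it below -/
import Mathlib

section
/- Fix positive reals λ, α, σ̄ with σ̄ < 1, write K = α·λ·(1 − σ̄) > 0, and fix ṡ ∈ ℝ. The function T̃(a) = λ·ℓ(a/λ) + α(1−σ̄)·ℓ((ṡ + a)/(α(1−σ̄))), defined for a ≥ max(0, −ṡ) with ℓ(x) = x·log x − x + 1, attains its unique minimum at a* = (−ṡ + sqrt(ṡ² + 4K))/2, i.e. a* is the unique nonnegative root of a² + a·ṡ − K = 0 with ṡ + a* > 0. -/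
noncomputable def ell (x : ℝ) : ℝ := x * Real.log x - x + 1

lemma ell_tangent_lt {x y : ℝ} (hx : 0 ≤ x) (hy : 0 < y) (hxy : x ≠ y) :
    ell y + Real.log y * (x - y) < ell x := by
  rcases eq_or_lt_of_le hx with h0 | hx'
  · rw [← h0]
    simp only [ell, Real.log_zero]
    ring_nf
    nlinarith
  · have hyx : y / x ≠ 1 := by
      intro h
      apply hxy
      field_simp at h
      linarith
    have hlog := Real.log_lt_sub_one_of_pos (div_pos hy hx') hyx
    rw [Real.log_div hy.ne' hx'.ne'] at hlog
    have e : x * (y / x - 1) = y - x := by field_simp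
    have h2 : x * (Real.log y - Real.log x) < y - x := by
      have := mul_lt_mul_of_pos_left hlog hx'
      linarith [e, this]
    simp only [ell]
    nlinarith [h2]

lemma ell_tangent_le {x y : ℝ} (hx : 0 ≤ x) (hy : 0 < y) :
    ell y + Real.log y * (x - y) ≤ ell x := by
  rcases eq_or_ne x y with h | h
  · subst h; simp
  · exact (ell_tangent_lt hx hy h).le

/-- The SIS Lagrangian one-dimensional optimization: with `K = α·λ·(1−σ̄) > 0`, the function
`T̃(a) = λ·ℓ(a/λ) + α(1−σ̄)·ℓ((ṡ+a)/(α(1−σ̄)))`, on the domain `a ≥ max(0,−ṡ)`, attains its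
unique minimum at `a* = (−ṡ + √(ṡ² + 4K))/2`, the unique nonnegative root of
`a² + a·ṡ − K = 0`, with `ṡ + a* > 0`. -/
theorem sis_lagrangian_min (lam α σ sd : ℝ) (hlam : 0 < lam) (hα : 0 < α)
    (hσ0 : 0 < σ) (hσ1 : σ < 1) :
    let K := α * lam * (1 - σ)
    let astar := (-sd + Real.sqrt (sd ^ 2 + 4 * K)) / 2
    let Tt : ℝ → ℝ := fun a =>
      lam * ell (a / lam) + α * (1 - σ) * ell ((sd + a) / (α * (1 - σ)))
    0 < K ∧
    max 0 (-sd) ≤ astar ∧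
    (∀ a : ℝ, max 0 (-sd) ≤ a → a ≠ astar → Tt astar < Tt a) ∧
    astar ^ 2 + astar * sd - K = 0 ∧ 0 ≤ astar ∧ 0 < sd + astar ∧
    (∀ a : ℝ, 0 ≤ a → a ^ 2 + a * sd - K = 0 → a = astar) := by
  intro K astar Tt
  have hc : 0 < α * (1 - σ) := mul_pos hα (by linarith)
  have hK : 0 < K := by
    show 0 < α * lam * (1 - σ)
    exact mul_pos (mul_pos hα hlam) (by linarith)
  have hKnn : (0:ℝ) ≤ sd ^ 2 + 4 * K := by nlinarith [sq_nonneg sd, hK]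
  have hr2 : Real.sqrt (sd ^ 2 + 4 * K) ^ 2 = sd ^ 2 + 4 * K := Real.sq_sqrt hKnn
  have habs : |sd| < Real.sqrt (sd ^ 2 + 4 * K) := by
    rw [← Real.sqrt_sq_eq_abs]
    exact Real.sqrt_lt_sqrt (sq_nonneg sd) (by linarith)
  have hpos : 0 < astar := by
    show 0 < (-sd + Real.sqrt (sd ^ 2 + 4 * K)) / 2
    have := le_abs_self sd
    linarith
  have hsum : 0 < sd + astar := by
    show 0 < sd + (-sd + Real.sqrt (sd ^ 2 + 4 * K)) / 2
    have := neg_abs_le sd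
    linarith
  have hroot : astar ^ 2 + astar * sd - K = 0 := by
    show ((-sd + Real.sqrt (sd ^ 2 + 4 * K)) / 2) ^ 2
      + ((-sd + Real.sqrt (sd ^ 2 + 4 * K)) / 2) * sd - K = 0
    nlinarith [hr2]
  have hmax : max 0 (-sd) ≤ astar := by
    apply max_le hpos.le
    linarith
  refine ⟨hK, hmax, ?_, hroot, hpos.le, hsum, ?_⟩
  · intro a ha hne
    have ha0 : 0 ≤ a := le_trans (le_max_left _ _) ha
    have hsa : 0 ≤ sd + a := by
      have := le_trans (le_max_right _ _) ha
      linarith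
    have hy1 : 0 < astar / lam := div_pos hpos hlam
    have hy2 : 0 < (sd + astar) / (α * (1 - σ)) := div_pos hsum hc
    have hx1 : 0 ≤ a / lam := div_nonneg ha0 hlam.le
    have hx2 : 0 ≤ (sd + a) / (α * (1 - σ)) := div_nonneg hsa hc.le
    have hne1 : a / lam ≠ astar / lam := by
      intro h
      apply hne
      field_simp at h
      exact h
    have h1 := ell_tangent_lt hx1 hy1 hne1
    have h2 := ell_tangent_le hx2 hy2
    have key1 : lam * ell (astar / lam) + Real.log (astar / lam) * (a - astar)
        < lam * ell (a / lam) := by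
      calc lam * ell (astar / lam) + Real.log (astar / lam) * (a - astar)
          = lam * (ell (astar / lam) + Real.log (astar / lam) * (a / lam - astar / lam)) := by
            field_simp
        _ < lam * ell (a / lam) := by exact mul_lt_mul_of_pos_left h1 hlam
    have key2 : (α * (1 - σ)) * ell ((sd + astar) / (α * (1 - σ)))
        + Real.log ((sd + astar) / (α * (1 - σ))) * (a - astar)
        ≤ (α * (1 - σ)) * ell ((sd + a) / (α * (1 - σ))) := by
      calc (α * (1 - σ)) * ell ((sd + astar) / (α * (1 - σ)))
          + Real.log ((sd + astar) / (α * (1 - σ))) * (a - astar)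
          = (α * (1 - σ)) * (ell ((sd + astar) / (α * (1 - σ)))
            + Real.log ((sd + astar) / (α * (1 - σ)))
              * ((sd + a) / (α * (1 - σ)) - (sd + astar) / (α * (1 - σ)))) := by
            field_simp [hα.ne', (show (0:ℝ) < 1 - σ by linarith).ne']; ring
        _ ≤ (α * (1 - σ)) * ell ((sd + a) / (α * (1 - σ))) :=
            mul_le_mul_of_nonneg_left h2 hc.le
    have hprod : (astar / lam) * ((sd + astar) / (α * (1 - σ))) = 1 := by
      have hKdef : K = lam * (α * (1 - σ)) := by show α * lam * (1 - σ) = _; ring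
      have hKval : astar * (sd + astar) = lam * (α * (1 - σ)) := by
        linear_combination hroot + hKdef
      rw [div_mul_div_comm, div_eq_one_iff_eq (mul_pos hlam hc).ne']
      exact hKval
    have hlog : Real.log (astar / lam) + Real.log ((sd + astar) / (α * (1 - σ))) = 0 := by
      rw [← Real.log_mul hy1.ne' hy2.ne', hprod, Real.log_one]
    have hz : Real.log (astar / lam) * (a - astar)
        + Real.log ((sd + astar) / (α * (1 - σ))) * (a - astar) = 0 := by
      have : (Real.log (astar / lam) + Real.log ((sd + astar) / (α * (1 - σ)))) * (a - astar)
          = 0 := by rw [hlog, zero_mul]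
      linarith [this]
    show lam * ell (astar / lam) + α * (1 - σ) * ell ((sd + astar) / (α * (1 - σ)))
        < lam * ell (a / lam) + α * (1 - σ) * ell ((sd + a) / (α * (1 - σ)))
    linarith [key1, key2, hz]
  · intro a ha heq
    have hfac : (a - astar) * (a + astar + sd) = 0 := by linear_combination heq - hroot
    rcases mul_eq_zero.mp hfac with h | h
    · linarith
    · linarith
end

section
/- With a*(ṡ) = (−ṡ + sqrt(ṡ² + 4K))/2, K = λ·M > 0 (λ, M > 0), the optimal value satisfies L(ṡ) = M·ℓ(λ/a*(ṡ)) + λ·ℓ(a*(ṡ)/λ), where ℓ(x) = x log x − x + 1 and L(ṡ) = inf{λℓ(a/λ) + Mℓ(b/M) : a,b ≥ 0, b − a = ṡ}. -/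
noncomputable def Lfun (lam M : ℝ) (sd : ℝ) : ℝ :=
  sInf {x : ℝ | ∃ a b : ℝ, 0 ≤ a ∧ 0 ≤ b ∧ sd = b - a ∧
    x = lam * ell (a / lam) + M * ell (b / M)}

/-!
`ℓ` is convex with `ℓ' = log`, so the constrained problem is minimised where the Lagrange
condition `log (a/λ) + log (b/M) = 0`, i.e. `a b = λ M`, holds. Together with `b - a = ṡ` this
makes `a` the positive root `a*` of `a (a + ṡ) = K`, and then `b/M = λ/a*`.
-/

open Real

lemma ell_add_log_mul_sub_le {x y : ℝ} (hx : 0 ≤ x) (hy : 0 < y) :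
    ell y + log y * (x - y) ≤ ell x := by
  rcases hx.eq_or_lt with rfl | hx
  · simp only [ell, zero_mul, log_zero]
    linarith
  · have hlog : log (y / x) ≤ y / x - 1 := log_le_sub_one_of_pos (by positivity)
    rw [log_div hy.ne' hx.ne'] at hlog
    have key : x * (log y - log x) ≤ y - x := by
      calc x * (log y - log x) ≤ x * (y / x - 1) := by gcongr
        _ = y - x := by field_simp
    simp only [ell]
    linarith

lemma mul_ell_div_add_log_mul_sub_le {c x y : ℝ} (hc : 0 < c) (hx : 0 ≤ x) (hy : 0 < y) :
    c * ell (y / c) + log (y / c) * (x - y) ≤ c * ell (x / c) := by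
  have h := mul_le_mul_of_nonneg_left
    (ell_add_log_mul_sub_le (div_nonneg hx hc.le) (div_pos hy hc)) hc.le
  have hscale : c * (log (y / c) * (x / c - y / c)) = log (y / c) * (x - y) := by
    field_simp
  rwa [mul_add, hscale] at h

lemma add_mul_ell_le_of_mul_eq {lam M a₀ b₀ a b : ℝ} (hlam : 0 < lam) (hM : 0 < M)
    (ha₀ : 0 < a₀) (hb₀ : 0 < b₀) (hab₀ : a₀ * b₀ = lam * M) (ha : 0 ≤ a) (hb : 0 ≤ b)
    (hsub : b - a = b₀ - a₀) :
    lam * ell (a₀ / lam) + M * ell (b₀ / M) ≤ lam * ell (a / lam) + M * ell (b / M) := by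
  have hlog : log (a₀ / lam) + log (b₀ / M) = 0 := by
    rw [← log_mul (by positivity) (by positivity)]
    have : a₀ / lam * (b₀ / M) = 1 := by
      field_simp
      linarith
    rw [this, log_one]
  have hslope : log (a₀ / lam) * (a - a₀) + log (b₀ / M) * (b - b₀) = 0 := by
    rw [show b - b₀ = a - a₀ by linarith, ← add_mul, hlog, zero_mul]
  linarith [mul_ell_div_add_log_mul_sub_le hlam ha ha₀, mul_ell_div_add_log_mul_sub_le hM hb hb₀]

lemma neg_add_sqrt_sq_add_mul_pos (s : ℝ) {K : ℝ} (hK : 0 < K) :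
    0 < (-s + √(s ^ 2 + 4 * K)) / 2 := by
  have : |s| < √(s ^ 2 + 4 * K) := by
    rw [← sqrt_sq_eq_abs]
    exact sqrt_lt_sqrt (sq_nonneg s) (by linarith)
  linarith [le_abs_self s]

lemma neg_add_sqrt_sq_add_mul_mul_add (s : ℝ) {K : ℝ} (hK : 0 ≤ K) :
    (-s + √(s ^ 2 + 4 * K)) / 2 * ((-s + √(s ^ 2 + 4 * K)) / 2 + s) = K := by
  have hsq : √(s ^ 2 + 4 * K) ^ 2 = s ^ 2 + 4 * K := sq_sqrt (by positivity)
  linear_combination hsq / 4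

/-- With `a*(ṡ) = (−ṡ + √(ṡ² + 4K))/2`, `K = λM > 0`, the optimal value satisfies
`L(ṡ) = M·ℓ(λ/a*) + λ·ℓ(a*/λ)`. -/
theorem Lfun_eq (lam M sd : ℝ) (hlam : 0 < lam) (hM : 0 < M) :
    let K := lam * M
    let astar := (-sd + Real.sqrt (sd ^ 2 + 4 * K)) / 2
    Lfun lam M sd = M * ell (lam / astar) + lam * ell (astar / lam) := by
  intro K astar
  have hK : 0 < K := mul_pos hlam hM
  have ha : 0 < astar := neg_add_sqrt_sq_add_mul_pos sd hK
  have hab : astar * (astar + sd) = lam * M := neg_add_sqrt_sq_add_mul_mul_add sd hK.le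
  have hb : 0 < astar + sd := pos_of_mul_pos_right (hab ▸ hK) ha.le
  have hratio : lam / astar = (astar + sd) / M := by
    field_simp
    linarith
  rw [hratio, add_comm]
  refine IsLeast.csInf_eq ⟨⟨astar, astar + sd, ha.le, hb.le, by ring, rfl⟩, ?_⟩
  rintro _ ⟨a, b, ha', hb', rfl, rfl⟩
  exact add_mul_ell_le_of_mul_eq hlam hM ha hb hab ha' hb' (by ring)
end
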